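/- Let λ be an ℓ-core of length k and Φ̃ the column-deletion bijection to (ℓ−1)-cores. For any box B of λ not deleted by Φ̃, with corresponding box B̃ in Φ̃(λ): B has hook length < ℓ in λ if and only if B̃ has hook length < ℓ−1 in Φ̃(λ). -/

import Mathlib

/-- A partition: a weakly decreasing list of positive integers. -/
def IsPartition (l : List ℕ) : Prop := l.Pairwise (· ≥ ·) ∧ ∀ x ∈ l, 0 < x

/-- Hook length of the box in (0-based) row `a` and (1-based) column `c`. -/
def hook (l : List ℕ) (a c : ℕ) : ℕ :=
  (l.getD a 0 - c) + ((List.range l.length).filter (fun i => decide (a < i ∧ c ≤ l.getD i 0))).length + 1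

/-- `l` is an `ℓ`-core: no box has hook length divisible by `ℓ`. -/
def IsCore (ℓ : ℕ) (l : List ℕ) : Prop :=
  ∀ a < l.length, ∀ c, 1 ≤ c → c ≤ l.getD a 0 → ¬ (ℓ ∣ hook l a c)

/-- First-column hook lengths of `l` (the beta-numbers). -/
def betaList (l : List ℕ) : List ℕ := (List.range l.length).map (fun a => hook l a 1)

/-- The column analogue Φ̃ of the Berg–Vazirani bijection: delete every column
whose first-row hook length is congruent to h_{(1,1)} mod ℓ (columns are
1-based: column c+1 has top-box hook `hook l 0 (c+1)`), dropping empty rows. -/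
def tilde (ℓ : ℕ) (l : List ℕ) : List ℕ :=
  (l.map (fun p =>
    ((List.range p).filter
      (fun c => decide (¬ hook l 0 (c + 1) % ℓ = hook l 0 1 % ℓ))).length)).filter
    (fun x => decide (0 < x))

/-!
Number the unit steps of the boundary path of `l` from `0`, starting at its bottom-left corner:
the vertical step of row `a` is step `rowPos l a`, the horizontal step of column `c` is step
`colPos l c`, and the hook length of the box `(a, c)` is `rowPos l a - colPos l c`. As
`hook l 0 1 - hook l 0 c = colPos l c`, Φ̃ deletes exactly the columns whose step is a multiple
of `ℓ`. In an `ℓ`-core no row step is a multiple of `ℓ`, so, with `u = rowPos l a` and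
`v = colPos l c`, Φ̃ deletes `u / ℓ - v / ℓ` boxes of the arm of `(a, c)` and none of its leg.
The new hook length is `u - v - (u / ℓ - v / ℓ)`, and when `ℓ` divides neither `u` nor `v` this
is `< ℓ - 1` exactly when `u - v < ℓ`.
-/

open Finset

theorem Nat.sub_lt_iff_sub_sub_div_lt {ℓ u v : ℕ} (hu : ¬ ℓ ∣ u) (hv : ¬ ℓ ∣ v) :
    u - v < ℓ ↔ u - v - (u / ℓ - v / ℓ) < ℓ - 1 := by
  rcases Nat.lt_or_ge ℓ 2 with hℓ | hℓ
  · interval_cases ℓ <;> simp_all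
  rcases le_or_gt u v with huv | hvu
  · omega
  have hu' := Nat.div_add_mod u ℓ
  have hv' := Nat.div_add_mod v ℓ
  have hru := Nat.mod_lt u (show 0 < ℓ by omega)
  have hrv := Nat.mod_lt v (show 0 < ℓ by omega)
  have hru0 : u % ℓ ≠ 0 := mt Nat.dvd_of_mod_eq_zero hu
  have hrv0 : v % ℓ ≠ 0 := mt Nat.dvd_of_mod_eq_zero hv
  obtain ⟨d, hd⟩ : ∃ d, u / ℓ = v / ℓ + d := Nat.exists_eq_add_of_le (Nat.div_le_div_right hvu.le)
  rw [hd, mul_add] at hu'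
  rw [hd, Nat.add_sub_cancel_left]
  -- `u - v = ℓ * d + u % ℓ - v % ℓ` with both residues in `[1, ℓ - 1]`
  obtain _ | _ | d := d
  · omega
  · omega
  · have : ℓ * (d + 1 + 1) = ℓ * d + 2 * ℓ := by ring
    have : d ≤ ℓ * d := Nat.le_mul_of_pos_left d (by omega)
    omega

theorem List.length_filter_range (n : ℕ) (P : ℕ → Prop) [DecidablePred P] :
    ((List.range n).filter (fun i => decide (P i))).length = #{i ∈ Finset.range n | P i} :=
  rfl

theorem List.getD_filter_pos_of_pairwise {L : List ℕ} (hL : L.Pairwise (· ≥ ·)) (i : ℕ) :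
    (L.filter (fun x => decide (0 < x))).getD i 0 = L.getD i 0 := by
  induction L generalizing i with
  | nil => simp
  | cons x t ih =>
    rcases Nat.eq_zero_or_pos x with rfl | hx
    · have hzero : ∀ y ∈ (0 :: t), y = 0 := by
        simpa using fun y hy => Nat.le_zero.mp (List.rel_of_pairwise_cons hL hy)
      rw [List.filter_eq_nil_iff.mpr fun y hy => by simp [hzero y hy], List.getD_nil,
        List.getD_eq_getElem?_getD]
      cases h : (0 :: t)[i]? with
      | none => rfl
      | some y => exact (hzero y (List.mem_of_getElem? h)).symm
    · cases i
      · simp [hx]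
      · rw [List.filter_cons_of_pos (p := fun x => decide (0 < x)) (by simpa using hx),
          List.getD_cons_succ, List.getD_cons_succ, ih hL.of_cons]

theorem Nat.card_filter_dvd_Ioc (ℓ : ℕ) {v u : ℕ} (h : v ≤ u) :
    #{y ∈ Ioc v u | ℓ ∣ y} = u / ℓ - v / ℓ := by
  have hsplit : #{y ∈ Ioc 0 u | ℓ ∣ y} = #{y ∈ Ioc 0 v | ℓ ∣ y} + #{y ∈ Ioc v u | ℓ ∣ y} := by
    rw [← Ioc_union_Ioc_eq_Ioc v.zero_le h, filter_union,
      card_union_of_disjoint (disjoint_filter_filter (Ioc_disjoint_Ioc_of_le le_rfl))]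
  rw [Nat.Ioc_filter_dvd_card_eq_div, Nat.Ioc_filter_dvd_card_eq_div] at hsplit
  omega

namespace IsPartition

variable {l : List ℕ}

theorem getD_le_getD (hp : IsPartition l) {i j : ℕ} (hij : i ≤ j) (hj : j < l.length) :
    l.getD j 0 ≤ l.getD i 0 := by
  rcases hij.eq_or_lt with rfl | hij
  · rfl
  rw [List.getD_eq_getElem _ _ hj, List.getD_eq_getElem _ _ (hij.trans hj)]
  exact List.pairwise_iff_getElem.mp hp.1 i j _ hj hij

theorem getD_pos (hp : IsPartition l) {i : ℕ} (hi : i < l.length) : 0 < l.getD i 0 := by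
  rw [List.getD_eq_getElem _ _ hi]
  exact hp.2 _ (List.getElem_mem _)

end IsPartition

theorem one_le_hook (l : List ℕ) (a c : ℕ) : 1 ≤ hook l a c := by
  unfold hook; omega

theorem hook_eq_card_range (l : List ℕ) {N : ℕ} (hN : l.length ≤ N) (a : ℕ) {c : ℕ}
    (hc : 1 ≤ c) :
    hook l a c = (l.getD a 0 - c) + #{i ∈ range N | a < i ∧ c ≤ l.getD i 0} + 1 := by
  have hlen : ∀ i, c ≤ l.getD i 0 → i < l.length := fun i hi => by
    by_contra h
    rw [List.getD_eq_default _ _ (not_lt.mp h)] at hi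
    omega
  unfold hook
  rw [List.length_filter_range]
  congr 3
  ext i
  simp only [mem_filter, mem_range]
  exact ⟨fun h => ⟨by omega, h.2⟩, fun h => ⟨hlen i h.2.2, h.2⟩⟩

def numRowsLT (l : List ℕ) (c : ℕ) : ℕ := #{i ∈ range l.length | l.getD i 0 < c}

def rowPos (l : List ℕ) (a : ℕ) : ℕ := l.getD a 0 + (l.length - 1 - a)

def colPos (l : List ℕ) (c : ℕ) : ℕ := c - 1 + numRowsLT l c

theorem colPos_lt_colPos {l : List ℕ} {c c' : ℕ} (hc : 1 ≤ c) (hcc' : c < c') :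
    colPos l c < colPos l c' := by
  have : numRowsLT l c ≤ numRowsLT l c' :=
    card_le_card (monotone_filter_right _ fun _ _ h => h.trans hcc')
  unfold colPos
  omega

section Positions

variable {l : List ℕ} (hp : IsPartition l)
include hp

theorem hook_add_colPos {a c : ℕ} (ha : a < l.length) (hc1 : 1 ≤ c) (hc2 : c ≤ l.getD a 0) :
    hook l a c + colPos l c = rowPos l a := by
  have hupper : {i ∈ range l.length | c ≤ l.getD i 0 ∧ i ≤ a} = range (a + 1) := by
    ext i
    simp only [mem_filter, mem_range]
    exact ⟨fun h => by omega,
      fun h => ⟨by omega, hc2.trans (hp.getD_le_getD (by omega) ha), by omega⟩⟩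
  have hrows := card_filter_add_card_filter_not (s := range l.length) (fun i => l.getD i 0 < c)
  have hlong := card_filter_add_card_filter_not
    (s := {i ∈ range l.length | c ≤ l.getD i 0}) (fun i => a < i)
  simp only [filter_filter, not_lt, hupper, card_range, and_comm (b := a < _)] at hrows hlong
  rw [hook_eq_card_range l le_rfl a hc1, rowPos, colPos, numRowsLT]
  omega

theorem colPos_one : colPos l 1 = 0 := by
  rw [colPos, numRowsLT, Nat.sub_self, zero_add, card_eq_zero, filter_eq_empty_iff]
  exact fun i hi => by have := hp.getD_pos (mem_range.mp hi); omega

theorem hook_one {a : ℕ} (ha : a < l.length) : hook l a 1 = rowPos l a := by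
  simpa [colPos_one hp] using hook_add_colPos hp ha le_rfl (hp.getD_pos ha)

theorem hook_eq_rowPos_sub_colPos {a c : ℕ} (ha : a < l.length) (hc1 : 1 ≤ c)
    (hc2 : c ≤ l.getD a 0) : hook l a c = rowPos l a - colPos l c := by
  have := hook_add_colPos hp ha hc1 hc2
  omega

theorem colPos_lt_rowPos {a c : ℕ} (ha : a < l.length) (hc1 : 1 ≤ c) (hc2 : c ≤ l.getD a 0) :
    colPos l c < rowPos l a := by
  have := hook_add_colPos hp ha hc1 hc2
  have := one_le_hook l a c
  omega

theorem rowPos_lt_rowPos {i j : ℕ} (hij : i < j) (hj : j < l.length) :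
    rowPos l j < rowPos l i := by
  have := hp.getD_le_getD hij.le hj
  unfold rowPos
  omega

-- if row `i` is shorter than `j`, then so are all rows below it, and they all precede column `j`
theorem colPos_ne_rowPos {i j : ℕ} (hi : i < l.length) (hj : 1 ≤ j) : colPos l j ≠ rowPos l i := by
  rcases le_or_gt j (l.getD i 0) with hji | hij
  · exact (colPos_lt_rowPos hp hi hj hji).ne
  have hbelow : Ico i l.length ⊆ {k ∈ range l.length | l.getD k 0 < j} := fun k hk => by
    rw [mem_Ico] at hk
    exact mem_filter.mpr ⟨mem_range.mpr hk.2, (hp.getD_le_getD hk.1 hk.2).trans_lt hij⟩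
  have := card_le_card hbelow
  rw [Nat.card_Ico] at this
  unfold colPos rowPos numRowsLT
  omega

theorem range_rowPos {a : ℕ} (ha : a < l.length) :
    range (rowPos l a) =
      (Icc 1 (l.getD a 0)).image (colPos l) ∪ (Ioo a l.length).image (rowPos l) := by
  symm
  refine eq_of_subset_of_card_le (union_subset ?_ ?_) ?_
  · intro y hy
    obtain ⟨j, hj, rfl⟩ := mem_image.mp hy
    rw [mem_Icc] at hj
    exact mem_range.mpr (colPos_lt_rowPos hp ha hj.1 hj.2)
  · intro y hy
    obtain ⟨i, hi, rfl⟩ := mem_image.mp hy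
    rw [mem_Ioo] at hi
    exact mem_range.mpr (rowPos_lt_rowPos hp hi.1 hi.2)
  have hdisj : Disjoint ((Icc 1 (l.getD a 0)).image (colPos l))
      ((Ioo a l.length).image (rowPos l)) := by
    simp only [disjoint_left, mem_image, mem_Icc, mem_Ioo, not_exists, not_and]
    rintro _ ⟨j, hj, rfl⟩ i hi h
    exact colPos_ne_rowPos hp hi.2 hj.1 h.symm
  have hcol : StrictMonoOn (colPos l) (Icc 1 (l.getD a 0)) := fun j hj _ _ h =>
    colPos_lt_colPos (mem_Icc.mp hj).1 h
  have hrow : StrictAntiOn (rowPos l) (Ioo a l.length) := fun _ _ j hj h =>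
    rowPos_lt_rowPos hp h (mem_Ioo.mp hj).2
  rw [card_union_of_disjoint hdisj, card_image_of_injOn hcol.injOn,
    card_image_of_injOn hrow.injOn, card_range,
    Nat.card_Icc, Nat.card_Ioo, rowPos]
  omega

end Positions

theorem IsCore.not_dvd_rowPos {ℓ : ℕ} {l : List ℕ} (hc : IsCore ℓ l) (hp : IsPartition l) {i : ℕ}
    (hi : i < l.length) : ¬ ℓ ∣ rowPos l i := by
  rw [← hook_one hp hi]
  exact hc i hi 1 le_rfl (hp.getD_pos hi)

-- Every multiple of `ℓ` below `rowPos l a` is the step of a column of row `a`, since no row step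
-- is a multiple of `ℓ`.
theorem IsCore.card_filter_dvd_colPos {ℓ : ℕ} {l : List ℕ} (hc : IsCore ℓ l) (hp : IsPartition l)
    {a c : ℕ} (ha : a < l.length) (hc1 : 1 ≤ c) (hc2 : c ≤ l.getD a 0) :
    #{j ∈ Ico c (l.getD a 0) | ℓ ∣ colPos l (j + 1)} = rowPos l a / ℓ - colPos l c / ℓ := by
  have hcol : StrictMonoOn (fun j => colPos l (j + 1)) (Ico c (l.getD a 0)) :=
    fun _ _ _ _ h => colPos_lt_colPos (by omega) (by omega)
  have himage : {j ∈ Ico c (l.getD a 0) | ℓ ∣ colPos l (j + 1)}.image (fun j => colPos l (j + 1))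
      = {y ∈ Ioc (colPos l c) (rowPos l a) | ℓ ∣ y} := by
    ext y
    simp only [mem_image, mem_filter, mem_Ico, mem_Ioc]
    constructor
    · rintro ⟨j, ⟨hj, hdvd⟩, rfl⟩
      exact ⟨⟨colPos_lt_colPos hc1 (by omega),
        (colPos_lt_rowPos hp ha (by omega) (by omega)).le⟩, hdvd⟩
    · rintro ⟨⟨hcy, hya⟩, hdvd⟩
      have hy : y ∈ range (rowPos l a) :=
        mem_range.mpr (hya.lt_of_ne fun h => hc.not_dvd_rowPos hp ha (h ▸ hdvd))
      rw [range_rowPos hp ha, mem_union, mem_image, mem_image] at hy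
      rcases hy with ⟨j, hj, rfl⟩ | ⟨i, hi, rfl⟩
      · rw [mem_Icc] at hj
        have hcj : c < j := by
          by_contra! hjc
          rcases hjc.eq_or_lt with rfl | hjc
          · exact hcy.false
          · exact (colPos_lt_colPos hj.1 hjc).not_gt hcy
        obtain ⟨j, rfl⟩ : ∃ j', j = j' + 1 := ⟨j - 1, by omega⟩
        exact ⟨j, ⟨⟨by omega, by omega⟩, hdvd⟩, rfl⟩
      · exact absurd hdvd (hc.not_dvd_rowPos hp (mem_Ioo.mp hi).2)
  rw [← Nat.card_filter_dvd_Ioc ℓ (colPos_lt_rowPos hp ha hc1 hc2).le, ← himage,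
    card_image_of_injOn (hcol.mono (coe_subset.mpr (filter_subset _ _))).injOn]

-- `tilde ℓ l` is `l.map (keptCols ℓ l)` with its zero entries removed.
def keptCols (ℓ : ℕ) (l : List ℕ) (p : ℕ) : ℕ :=
  ((List.range p).filter (fun j => decide (¬ hook l 0 (j + 1) % ℓ = hook l 0 1 % ℓ))).length

theorem keptCols_mono (ℓ : ℕ) (l : List ℕ) : Monotone (keptCols ℓ l) := fun p q h => by
  simp only [keptCols, List.length_filter_range]
  exact card_le_card (filter_subset_filter _ (range_subset_range.mpr h))

section Kept

variable {ℓ : ℕ} {l : List ℕ} (hp : IsPartition l) (h0 : 0 < l.length)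
include hp h0

theorem hook_zero_mod_eq_iff {c : ℕ} (hc1 : 1 ≤ c) (hc2 : c ≤ l.getD 0 0) :
    hook l 0 c % ℓ = hook l 0 1 % ℓ ↔ ℓ ∣ colPos l c := by
  rw [hook_one hp h0, ← hook_add_colPos hp h0 hc1 hc2]
  exact (Nat.modEq_iff_dvd' le_self_add).trans (by rw [Nat.add_sub_cancel_left])

theorem keptCols_eq_card {p : ℕ} (hp0 : p ≤ l.getD 0 0) :
    keptCols ℓ l p = #{j ∈ range p | ¬ ℓ ∣ colPos l (j + 1)} := by
  rw [keptCols, List.length_filter_range]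
  exact congrArg card (filter_congr fun j hj =>
    not_congr (hook_zero_mod_eq_iff hp h0 (by omega) (by rw [mem_range] at hj; omega)))

theorem keptCols_le_keptCols_iff {c : ℕ} (hc1 : 1 ≤ c) (hc2 : c ≤ l.getD 0 0)
    (hkept : ¬ ℓ ∣ colPos l c) {p : ℕ} : keptCols ℓ l c ≤ keptCols ℓ l p ↔ c ≤ p := by
  refine ⟨fun h => ?_, fun h => keptCols_mono ℓ l h⟩
  obtain ⟨c, rfl⟩ : ∃ c', c = c' + 1 := ⟨c - 1, by omega⟩
  have hsucc : keptCols ℓ l (c + 1) = keptCols ℓ l c + 1 := by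
    rw [keptCols_eq_card hp h0 hc2, keptCols_eq_card hp h0 (by omega), range_add_one,
      filter_insert, if_pos hkept, card_insert_of_notMem (by simp)]
  by_contra! hpc
  have := keptCols_mono ℓ l (show p ≤ c by omega)
  omega

theorem keptCols_sub_keptCols {c t : ℕ} (hct : c ≤ t) (ht : t ≤ l.getD 0 0) :
    keptCols ℓ l t - keptCols ℓ l c = (t - c) - #{j ∈ Ico c t | ℓ ∣ colPos l (j + 1)} := by
  have hsplit := card_filter_add_card_filter_not (s := Ico c t) (fun j => ℓ ∣ colPos l (j + 1))
  have hrange : range t = range c ∪ Ico c t := by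
    rw [range_eq_Ico, range_eq_Ico, Ico_union_Ico_eq_Ico c.zero_le hct]
  have hdisj : Disjoint (range c) (Ico c t) := by
    rw [range_eq_Ico]
    exact Ico_disjoint_Ico_consecutive 0 c t
  rw [keptCols_eq_card hp h0 ht, keptCols_eq_card hp h0 (hct.trans ht), hrange, filter_union,
    card_union_of_disjoint (disjoint_filter_filter hdisj)]
  rw [Nat.card_Ico] at hsplit
  omega

end Kept

theorem tilde_getD {l : List ℕ} (hp : IsPartition l) (ℓ i : ℕ) :
    (tilde ℓ l).getD i 0 = keptCols ℓ l (l.getD i 0) := by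
  have hsorted : (l.map (keptCols ℓ l)).Pairwise (· ≥ ·) :=
    hp.1.map _ fun _ _ h => keptCols_mono ℓ l h
  show ((l.map (keptCols ℓ l)).filter (fun x => decide (0 < x))).getD i 0 = _
  rw [List.getD_filter_pos_of_pairwise hsorted]
  exact List.getD_map l 0 (keptCols ℓ l)

theorem hook_tilde {ℓ : ℕ} {l : List ℕ} (hp : IsPartition l) {a c : ℕ} (ha : a < l.length)
    (hc1 : 1 ≤ c) (hc2 : c ≤ l.getD a 0) (hkept : ¬ ℓ ∣ colPos l c) :
    hook (tilde ℓ l) a (keptCols ℓ l c) =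
      hook l a c - #{j ∈ Ico c (l.getD a 0) | ℓ ∣ colPos l (j + 1)} := by
  have h0 : 0 < l.length := by omega
  have hla : l.getD a 0 ≤ l.getD 0 0 := hp.getD_le_getD a.zero_le ha
  have hle : ∀ p, keptCols ℓ l c ≤ keptCols ℓ l p ↔ c ≤ p := fun _ =>
    keptCols_le_keptCols_iff hp h0 hc1 (hc2.trans hla) hkept
  have hkept1 : 1 ≤ keptCols ℓ l c :=
    Nat.pos_of_ne_zero fun h => absurd ((hle 0).mp (h ▸ Nat.zero_le (keptCols ℓ l 0))) (by omega)
  have hlen : (tilde ℓ l).length ≤ l.length :=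
    (List.length_filter_le _ _).trans (List.length_map _).le
  have hleg : {i ∈ range l.length | a < i ∧ keptCols ℓ l c ≤ (tilde ℓ l).getD i 0}
      = {i ∈ range l.length | a < i ∧ c ≤ l.getD i 0} :=
    filter_congr fun i _ => by rw [tilde_getD hp, hle]
  have hdeleted : #{j ∈ Ico c (l.getD a 0) | ℓ ∣ colPos l (j + 1)} ≤ l.getD a 0 - c :=
    (card_filter_le _ _).trans (Nat.card_Ico _ _).le
  rw [hook_eq_card_range _ hlen a hkept1, hook_eq_card_range l le_rfl a hc1, hleg, tilde_getD hp,
    keptCols_sub_keptCols hp h0 hc2 hla]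
  omega

theorem stmt17_general (ℓ : ℕ) (l : List ℕ)
    (hp : IsPartition l) (hc : IsCore ℓ l)
    (a c : ℕ) (ha : a < l.length) (hc1 : 1 ≤ c) (hc2 : c ≤ l.getD a 0)
    (hnd : ¬ hook l 0 c % ℓ = hook l 0 1 % ℓ) :
    (hook l a c < ℓ ↔
      hook (tilde ℓ l) a
        (((List.range c).filter
          (fun j => decide (¬ hook l 0 (j + 1) % ℓ = hook l 0 1 % ℓ))).length)
        < ℓ - 1) := by
  have h0 : 0 < l.length := by omega
  have hkept : ¬ ℓ ∣ colPos l c := by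
    rwa [← hook_zero_mod_eq_iff hp h0 hc1 (hc2.trans (hp.getD_le_getD a.zero_le ha))]
  change _ ↔ hook (tilde ℓ l) a (keptCols ℓ l c) < ℓ - 1
  rw [hook_tilde hp ha hc1 hc2 hkept, hc.card_filter_dvd_colPos hp ha hc1 hc2,
    hook_eq_rowPos_sub_colPos hp ha hc1 hc2]
  exact Nat.sub_lt_iff_sub_sub_div_lt (hc.not_dvd_rowPos hp ha) hkept

/-- A box B = (a,c) of the ℓ-core l not deleted by Φ̃ has hook length < ℓ iff the
corresponding box of Φ̃(l) (in row a, column = number of non-deleted columns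
among 1..c) has hook length < ℓ - 1. -/
theorem stmt17 (ℓ : ℕ) (hℓ : 2 ≤ ℓ) (l : List ℕ)
    (hp : IsPartition l) (hc : IsCore ℓ l)
    (a c : ℕ) (ha : a < l.length) (hc1 : 1 ≤ c) (hc2 : c ≤ l.getD a 0)
    (hnd : ¬ hook l 0 c % ℓ = hook l 0 1 % ℓ) :
    (hook l a c < ℓ ↔
      hook (tilde ℓ l) a
        (((List.range c).filter
          (fun j => decide (¬ hook l 0 (j + 1) % ℓ = hook l 0 1 % ℓ))).length)
        < ℓ - 1) :=
  stmt17_general ℓ l hp hc a c ha hc1 hc2 hnd
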